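/- Characterization of the SW estimand (equation (B.2.2)): Assume (A1)–(A3), P(A̲(K−m)=1_m) > 0 and P(A̲(K−m)=0_m) > 0. Then θ_sw^(m) = Σ_{b̄ ∈ {0,1}^{K−m}} 𝔼[Y^{(b̄,1_m)}] · P(Ā(K−m−1)=b̄ | A̲(K−m)=1_m) − Σ_{b̄ ∈ {0,1}^{K−m}} 𝔼[Y^{(b̄,0_m)}] · P(Ā(K−m−1)=b̄ | A̲(K−m)=0_m). -/

import Mathlib

open MeasureTheory Finset
open scoped Classical

namespace MSMPaper

noncomputable section

variable {Ω : Type*} [MeasurableSpace Ω] {𝓛 : Type*}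

/-- Conditional probability `P(E | F) = P(E ∩ F) / P(F)` as a real number
(junk value `0` when `P F = 0`). -/
def cP (P : Measure Ω) (E F : Set Ω) : ℝ := (P (E ∩ F)).toReal / (P F).toReal

variable {K : ℕ}

/-- Event `Ā(t−1) = b̄` (treatment history up to, not including, time `t`). -/
def Apast (A : Fin K → Ω → Bool) (t : ℕ) (b : Fin K → Bool) : Set Ω :=
  {ω | ∀ k : Fin K, (k : ℕ) < t → A k ω = b k}

/-- Event `L̄(t) = l̄` (covariate history up to and including time `t`). -/
def Lpast (L : Fin K → Ω → 𝓛) (t : ℕ) (l : Fin K → 𝓛) : Set Ω :=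
  {ω | ∀ k : Fin K, (k : ℕ) ≤ t → L k ω = l k}

/-- Event `A̲(s, t−1) = b` (treatment history from time `s` up to, not including, `t`). -/
def Aseg (A : Fin K → Ω → Bool) (s t : ℕ) (b : Fin K → Bool) : Set Ω :=
  {ω | ∀ k : Fin K, s ≤ (k : ℕ) → (k : ℕ) < t → A k ω = b k}

/-- Event `A̲(K−m) = a̲` for a (last-`m`) treatment vector `as`. -/
def EtrV (A : Fin K → Ω → Bool) (m : ℕ) (as : Fin K → Bool) : Set Ω :=
  {ω | ∀ k : Fin K, K - m ≤ (k : ℕ) → A k ω = as k}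

/-- Event `A̲(K−m) = a_m` (constant `a` on the last `m` coordinates). -/
def Etr (A : Fin K → Ω → Bool) (m : ℕ) (a : Bool) : Set Ω :=
  EtrV A m (fun _ => a)

/-- Stabilized weights `W_sw`. -/
def Wsw (P : Measure Ω) (A : Fin K → Ω → Bool) (L : Fin K → Ω → 𝓛) : Ω → ℝ :=
  fun ω => ∏ k : Fin K,
    cP P {ω' | A k ω' = A k ω} (Apast A (k : ℕ) (fun j => A j ω)) /
      cP P {ω' | A k ω' = A k ω}
        (Lpast L (k : ℕ) (fun j => L j ω) ∩ Apast A (k : ℕ) (fun j => A j ω))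

/-- Restricted stabilized weights `W_rsw^(m)`. -/
def Wrsw (P : Measure Ω) (A : Fin K → Ω → Bool) (L : Fin K → Ω → 𝓛) (m : ℕ) : Ω → ℝ :=
  fun ω => ∏ k ∈ Finset.univ.filter (fun k : Fin K => K - m ≤ (k : ℕ)),
    cP P {ω' | A k ω' = A k ω} (Aseg A (K - m) (k : ℕ) (fun j => A j ω)) /
      cP P {ω' | A k ω' = A k ω}
        (Lpast L (k : ℕ) (fun j => L j ω) ∩ Apast A (k : ℕ) (fun j => A j ω))

/-- Partial stabilized weights `W_psw^(m)`. -/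
def Wpsw (P : Measure Ω) (A : Fin K → Ω → Bool) (L : Fin K → Ω → 𝓛) (m : ℕ) : Ω → ℝ :=
  fun ω => ∏ k ∈ Finset.univ.filter (fun k : Fin K => K - m ≤ (k : ℕ)),
    cP P {ω' | A k ω' = A k ω} (Apast A (k : ℕ) (fun j => A j ω)) /
      cP P {ω' | A k ω' = A k ω}
        (Lpast L (k : ℕ) (fun j => L j ω) ∩ Apast A (k : ℕ) (fun j => A j ω))

/-- IP-weighted contrast `θ_W^(m)`. -/
def θW (P : Measure Ω) (A : Fin K → Ω → Bool) (m : ℕ) (W Y : Ω → ℝ) : ℝ :=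
  (∫ ω in Etr A m true, W ω * Y ω ∂P) / (∫ ω in Etr A m true, W ω ∂P) -
    (∫ ω in Etr A m false, W ω * Y ω ∂P) / (∫ ω in Etr A m false, W ω ∂P)

/-- `rev j` is the time index `K − 1 − j`; the paper's coefficient `ψ_{j+1}`
multiplies `a(K − (j+1)) = a(rev j)`. -/
def rev (j : Fin K) : Fin K := ⟨K - 1 - (j : ℕ), by have := j.isLt; omega⟩

/-- `θ^(K) = 𝔼[Y^{1_K}] − 𝔼[Y^{0_K}]`. -/
def θKfull (P : Measure Ω) (Ypot : (Fin K → Bool) → Ω → ℝ) : ℝ :=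
  (∫ ω, Ypot (fun _ => true) ω ∂P) - ∫ ω, Ypot (fun _ => false) ω ∂P

/-- (A1) consistency. -/
def A1ok (A : Fin K → Ω → Bool) (Y : Ω → ℝ) (Ypot : (Fin K → Bool) → Ω → ℝ) : Prop :=
  ∀ (a : Fin K → Bool) (ω : Ω), (∀ k, A k ω = a k) → Y ω = Ypot a ω

/-- (A2) sequential exchangeability. -/
def A2ok (P : Measure Ω) (A : Fin K → Ω → Bool) (L : Fin K → Ω → 𝓛)
    (Ypot : (Fin K → Bool) → Ω → ℝ) : Prop :=
  ∀ (t : Fin K) (a : Fin K → Bool) (B : Set ℝ), MeasurableSet B →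
    ∀ (av : Bool) (l : Fin K → 𝓛) (b : Fin K → Bool),
      0 < P (Lpast L (t : ℕ) l ∩ Apast A (t : ℕ) b) →
      cP P ({ω | Ypot a ω ∈ B} ∩ {ω | A t ω = av}) (Lpast L (t : ℕ) l ∩ Apast A (t : ℕ) b) =
        cP P {ω | Ypot a ω ∈ B} (Lpast L (t : ℕ) l ∩ Apast A (t : ℕ) b) *
          cP P {ω | A t ω = av} (Lpast L (t : ℕ) l ∩ Apast A (t : ℕ) b)

/-- (A3) positivity. -/
def A3ok (P : Measure Ω) (A : Fin K → Ω → Bool) (L : Fin K → Ω → 𝓛) : Prop :=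
  ∀ (t : Fin K) (av : Bool) (l : Fin K → 𝓛) (b : Fin K → Bool),
    0 < P (Lpast L (t : ℕ) l ∩ Apast A (t : ℕ) b) →
    0 < cP P {ω | A t ω = av} (Lpast L (t : ℕ) l ∩ Apast A (t : ℕ) b)

/-- The marginal structural model `𝔼[Y^{ā}] = ψ₀ + Σ_{j=1}^K ψ_j a(K−j)`;
here `ψ j` is the paper's `ψ_{j+1}`, the coefficient of `a(K−1−j)`. -/
def MSMeq (P : Measure Ω) (Ypot : (Fin K → Bool) → Ω → ℝ) (ψ0 : ℝ) (ψ : Fin K → ℝ) : Prop :=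
  ∀ a : Fin K → Bool,
    (∫ ω, Ypot a ω ∂P) = ψ0 + ∑ j : Fin K, ψ j * (if a (rev j) = true then 1 else 0)

/-- (A5) conditional MSM given the past treatment history `Ā(K−m−1)`. -/
def A5ok (P : Measure Ω) (A : Fin K → Ω → Bool) (Ypot : (Fin K → Bool) → Ω → ℝ)
    (m : ℕ) : Prop :=
  ∀ b : Fin K → Bool, 0 < P (Apast A (K - m) b) →
    ∃ (φ0 : ℝ) (φ : Fin K → ℝ), ∀ a : Fin K → Bool,
      (∫ ω in Apast A (K - m) b, Ypot a ω ∂P) / (P (Apast A (K - m) b)).toReal =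
        φ0 + ∑ j : Fin K, φ j * (if a (rev j) = true then 1 else 0)

/-- `q_{j+1} = P(A(K−1−j)=1 | A̲(K−m)=1_m) − P(A(K−1−j)=1 | A̲(K−m)=0_m)`. -/
def qcoef (P : Measure Ω) (A : Fin K → Ω → Bool) (m : ℕ) (j : Fin K) : ℝ :=
  cP P {ω | A (rev j) ω = true} (Etr A m true) -
    cP P {ω | A (rev j) ω = true} (Etr A m false)

end

noncomputable section

variable {Ω : Type*} [MeasurableSpace Ω] {K : ℕ}

/-- Concatenated regime `(b̄, a̲) ∈ {0,1}^K`: `b̄` on the coordinates before `K−m`,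
`a̲` on the last `m` coordinates. -/
def concatRegime (m : ℕ) (b : {k : Fin K // (k : ℕ) < K - m} → Bool)
    (as : Fin K → Bool) : Fin K → Bool :=
  fun k => if h : (k : ℕ) < K - m then b ⟨k, h⟩ else as k

/-- Event `Ā(K−m−1) = b̄` for a past history `b̄ ∈ {0,1}^{K−m}`. -/
def ApastV (A : Fin K → Ω → Bool) (m : ℕ)
    (b : {k : Fin K // (k : ℕ) < K - m} → Bool) : Set Ω :=
  {ω | ∀ (k : Fin K) (h : (k : ℕ) < K - m), A k ω = b ⟨k, h⟩}

end

/-! On the event `Ā = c` the stabilized weight is `P(Ā = c)` times the inverse-probability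
weight `1{Ā = c} / ∏ₖ P(A(k) = c(k) | L̄(k), Ā(k−1))`, because the numerators of `W_sw`
telescope to `P(Ā = c)`. Conditioning on one history stratum at a time, (A2) and (A3) show
that the inverse-probability weight integrates `Y^c` to `𝔼[Y^c]` and `1` to `1`. Splitting
`{A̲(K−m) = a_m}` by the past treatment `b̄` then turns the numerator and the denominator of
`θ_sw` into `Σ_b̄ P(Ā = (b̄, a_m)) 𝔼[Y^(b̄, a_m)]` and `P(A̲(K−m) = a_m)`. -/

section Fibers

variable {Ω β : Type*} [MeasurableSpace Ω] [MeasurableSpace β] [MeasurableSingletonClass β]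
  {μ : Measure Ω} {H : Ω → β} {E : Set Ω}

theorem setIntegral_fiber_mul_of_factorsThrough (hH : Measurable H) {g : Ω → ℝ}
    (hg : g.FactorsThrough H) (Z : Ω → ℝ) (ω₀ : Ω) :
    ∫ ω in H ⁻¹' {H ω₀}, g ω * Z ω ∂μ = g ω₀ * ∫ ω in H ⁻¹' {H ω₀}, Z ω ∂μ := by
  rw [← integral_const_mul]
  refine setIntegral_congr_fun (hH (measurableSet_singleton _)) fun ω hω => ?_
  rw [hg hω]

variable [Fintype β]

theorem integral_eq_sum_setIntegral_fiber (hH : Measurable H) {F : Ω → ℝ}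
    (hF : ∀ b, IntegrableOn F (H ⁻¹' {b}) μ) :
    ∫ ω, F ω ∂μ = ∑ b, ∫ ω in H ⁻¹' {b}, F ω ∂μ := by
  rw [← integral_iUnion_fintype (fun b => hH (measurableSet_singleton b))
    (pairwise_disjoint_fiber H) hF, ← Set.preimage_iUnion, Set.iUnion_of_singleton,
    Set.preimage_univ, setIntegral_univ]

theorem _root_.MeasureTheory.Integrable.mul_of_factorsThrough (hH : Measurable H)
    {g Z : Ω → ℝ} (hg : g.FactorsThrough H) (hZ : Integrable Z μ) :
    Integrable (fun ω => g ω * Z ω) μ := by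
  have hfiber : ∀ b, IntegrableOn (fun ω => g ω * Z ω) (H ⁻¹' {b}) μ := by
    intro b
    by_cases hb : b ∈ Set.range H
    · obtain ⟨ω₀, rfl⟩ := hb
      exact (hZ.const_mul (g ω₀)).integrableOn.congr_fun
        (fun ω hω => by rw [hg hω]) (hH (measurableSet_singleton _))
    · simp [Set.preimage_singleton_eq_empty.2 hb]
  rw [← integrableOn_univ, ← Set.preimage_univ (f := H), ← Set.iUnion_of_singleton,
    Set.preimage_iUnion]
  exact integrableOn_finite_iUnion.2 hfiber

theorem integral_mul_indicator_inv_cP_mul (hH : Measurable H) (hE : MeasurableSet E)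
    {g Z : Ω → ℝ} (hg : g.FactorsThrough H) (hZ : Integrable Z μ)
    (hfac : ∀ ω, 0 < μ (H ⁻¹' {H ω}) → ∫ ω' in E ∩ H ⁻¹' {H ω}, Z ω' ∂μ =
      cP μ E (H ⁻¹' {H ω}) * ∫ ω' in H ⁻¹' {H ω}, Z ω' ∂μ)
    (hprop : ∀ ω, 0 < μ (H ⁻¹' {H ω}) → cP μ E (H ⁻¹' {H ω}) ≠ 0) :
    ∫ ω, g ω * E.indicator (fun ω => (cP μ E (H ⁻¹' {H ω}))⁻¹) ω * Z ω ∂μ =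
      ∫ ω, g ω * Z ω ∂μ := by
  set π : Ω → ℝ := fun ω => cP μ E (H ⁻¹' {H ω})
  have hgπ : (fun ω => g ω * (π ω)⁻¹).FactorsThrough H := fun ω ω' h => by
    simp only [π, h, hg h]
  have hrw : (fun ω => g ω * E.indicator (fun ω => (π ω)⁻¹) ω * Z ω) =
      fun ω => g ω * (π ω)⁻¹ * E.indicator Z ω := by
    funext ω
    by_cases hω : ω ∈ E <;> simp [hω]
  rw [hrw, integral_eq_sum_setIntegral_fiber hH
      fun _ => ((hZ.indicator hE).mul_of_factorsThrough hH hgπ).integrableOn,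
    integral_eq_sum_setIntegral_fiber hH fun _ => (hZ.mul_of_factorsThrough hH hg).integrableOn]
  refine sum_congr rfl fun b _ => ?_
  by_cases hb : b ∈ Set.range H
  · obtain ⟨ω₀, rfl⟩ := hb
    rw [setIntegral_fiber_mul_of_factorsThrough hH hgπ,
      setIntegral_fiber_mul_of_factorsThrough hH hg, setIntegral_indicator hE, Set.inter_comm]
    rcases eq_zero_or_pos (μ (H ⁻¹' {H ω₀})) with hnull | hpos
    · simp [Measure.restrict_eq_zero.2 hnull, Measure.restrict_eq_zero.2
        (measure_mono_null Set.inter_subset_right hnull)]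
    · rw [hfac ω₀ hpos, mul_assoc, inv_mul_cancel_left₀ (hprop ω₀ hpos)]
  · simp [Set.preimage_singleton_eq_empty.2 hb]

end Fibers

section CondProb

variable {Ω : Type*} [MeasurableSpace Ω] {P : Measure Ω} {E G : Set Ω}

theorem cP_nonneg : 0 ≤ cP P E G := div_nonneg ENNReal.toReal_nonneg ENNReal.toReal_nonneg

variable [IsFiniteMeasure P]

theorem cP_mul_measureReal (hG : P G ≠ 0) : cP P E G * P.real G = P.real (E ∩ G) :=
  div_mul_cancel₀ _ ((measureReal_ne_zero_iff (measure_ne_top P G)).2 hG)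

theorem setIntegral_inter_eq_cP_mul {Z : Ω → ℝ} (hZ : Measurable Z) (hG : P G ≠ 0)
    (hind : ∀ B : Set ℝ, MeasurableSet B →
      cP P (Z ⁻¹' B ∩ E) G = cP P (Z ⁻¹' B) G * cP P E G) :
    ∫ ω in E ∩ G, Z ω ∂P = cP P E G * ∫ ω in G, Z ω ∂P := by
  have hlaw : (P.restrict (E ∩ G)).map Z = ENNReal.ofReal (cP P E G) • (P.restrict G).map Z := by
    refine Measure.ext fun B hB => ?_
    rw [Measure.smul_apply, Measure.map_apply hZ hB, Measure.map_apply hZ hB,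
      Measure.restrict_apply (hZ hB), Measure.restrict_apply (hZ hB), smul_eq_mul,
      ← ENNReal.toReal_eq_toReal_iff' (measure_ne_top _ _)
        (ENNReal.mul_ne_top ENNReal.ofReal_ne_top (measure_ne_top _ _)),
      ENNReal.toReal_mul, ENNReal.toReal_ofReal cP_nonneg, ← measureReal_def,
      ← measureReal_def, ← Set.inter_assoc, ← cP_mul_measureReal hG, hind B hB,
      ← cP_mul_measureReal hG]
    ring
  calc ∫ ω in E ∩ G, Z ω ∂P = ∫ x, x ∂(P.restrict (E ∩ G)).map Z :=
        (integral_map hZ.aemeasurable aestronglyMeasurable_id).symm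
    _ = cP P E G * ∫ x, x ∂(P.restrict G).map Z := by
        rw [hlaw, integral_smul_measure, ENNReal.toReal_ofReal cP_nonneg, smul_eq_mul]
    _ = cP P E G * ∫ ω in G, Z ω ∂P :=
        congrArg _ (integral_map hZ.aemeasurable aestronglyMeasurable_id)

end CondProb

section History

variable {Ω : Type*} {𝓛 : Type*} {K : ℕ}
  {A : Fin K → Ω → Bool} {L : Fin K → Ω → 𝓛}

def history (A : Fin K → Ω → Bool) (L : Fin K → Ω → 𝓛) (t : ℕ) (ω : Ω) :
    ({k : Fin K // (k : ℕ) ≤ t} → 𝓛) × ({k : Fin K // (k : ℕ) < t} → Bool) :=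
  (fun k => L k ω, fun k => A k ω)

theorem history_preimage_singleton (t : ℕ) (ω : Ω) :
    history A L t ⁻¹' {history A L t ω} =
      Lpast L t (fun j => L j ω) ∩ Apast A t (fun j => A j ω) := by
  ext ω'
  simp [history, Lpast, Apast, funext_iff]

theorem history_factorsThrough {s t : ℕ} (hst : s ≤ t) :
    (history A L s).FactorsThrough (history A L t) := fun ω ω' h => by
  simp only [history, Prod.mk.injEq, funext_iff, Subtype.forall] at h ⊢
  exact ⟨fun k hk => h.1 k (hk.trans hst), fun k hk => h.2 k (hk.trans_le hst)⟩

theorem filter_val_lt_succ {t : ℕ} (ht : t < K) :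
    univ.filter (fun k : Fin K => (k : ℕ) < t + 1) =
      insert ⟨t, ht⟩ (univ.filter fun k : Fin K => (k : ℕ) < t) := by
  ext k
  simp only [mem_filter, mem_univ, true_and, mem_insert, Fin.ext_iff]
  omega

theorem Apast_succ {t : ℕ} (ht : t < K) (c : Fin K → Bool) :
    Apast A (t + 1) c = {ω | A ⟨t, ht⟩ ω = c ⟨t, ht⟩} ∩ Apast A t c := by
  ext ω
  simp only [Apast, Set.mem_ofPred_eq, Set.mem_inter_iff]
  refine ⟨fun h => ⟨h _ (Nat.lt_succ_self t), fun k hk => h k (by omega)⟩,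
    fun ⟨hnow, hpast⟩ k hk => ?_⟩
  rcases Nat.lt_succ_iff_lt_or_eq.1 hk with hk | hk
  · exact hpast k hk
  · obtain rfl : k = ⟨t, ht⟩ := Fin.ext hk
    exact hnow

variable [MeasurableSpace Ω]

theorem measurable_history [MeasurableSpace 𝓛] (hA : ∀ k, Measurable (A k))
    (hL : ∀ k, Measurable (L k)) (t : ℕ) : Measurable (history A L t) :=
  (measurable_pi_lambda _ fun k => hL (k : {k : Fin K // (k : ℕ) ≤ t})).prodMk
    (measurable_pi_lambda _ fun k => hA (k : {k : Fin K // (k : ℕ) < t}))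

theorem measurableSet_Apast (hA : ∀ k, Measurable (A k)) (t : ℕ) (c : Fin K → Bool) :
    MeasurableSet (Apast A t c) := by
  simp only [Apast, Set.ofPred_forall]
  exact .iInter fun k => .iInter fun _ => hA k (measurableSet_singleton _)

end History

section InverseProbabilityWeight

variable {Ω : Type*} [MeasurableSpace Ω] {𝓛 : Type*} {K : ℕ} (P : Measure Ω)
  {A : Fin K → Ω → Bool} {L : Fin K → Ω → 𝓛}

theorem measureReal_Apast_eq_prod [IsProbabilityMeasure P] (c : Fin K → Bool) {t : ℕ}
    (ht : t ≤ K) :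
    P.real (Apast A t c) =
      ∏ k ∈ univ.filter (fun k : Fin K => (k : ℕ) < t),
        cP P {ω | A k ω = c k} (Apast A k c) := by
  induction t with
  | zero => simp [Apast, probReal_univ]
  | succ t ih =>
    rw [filter_val_lt_succ ht, prod_insert (by simp), ← ih (by omega), Apast_succ ht]
    by_cases hnull : P (Apast A t c) = 0
    · simp [measureReal_def, hnull, measure_mono_null Set.inter_subset_right hnull]
    · exact (cP_mul_measureReal hnull).symm

/-- The inverse-probability weight
`1{Ā(t−1) = c̄(t−1)} / ∏_{k<t} P(A(k) = c(k) | L̄(k), Ā(k−1))` of the regime `c`. -/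
noncomputable def ipw (A : Fin K → Ω → Bool) (L : Fin K → Ω → 𝓛) (c : Fin K → Bool) (t : ℕ)
    (ω : Ω) : ℝ :=
  ∏ k ∈ univ.filter (fun k : Fin K => (k : ℕ) < t),
    {ω' | A k ω' = c k}.indicator
      (fun ω' => (cP P {ω'' | A k ω'' = c k} (history A L k ⁻¹' {history A L k ω'}))⁻¹) ω

theorem ipw_succ {t : ℕ} (ht : t < K) (c : Fin K → Bool) (ω : Ω) :
    ipw P A L c (t + 1) ω = ipw P A L c t ω *
      {ω' | A ⟨t, ht⟩ ω' = c ⟨t, ht⟩}.indicator (fun ω' => (cP P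
        {ω'' | A ⟨t, ht⟩ ω'' = c ⟨t, ht⟩} (history A L t ⁻¹' {history A L t ω'}))⁻¹) ω := by
  rw [ipw, filter_val_lt_succ ht, prod_insert (by simp), mul_comm, ipw]

theorem ipw_factorsThrough (c : Fin K → Bool) (t : ℕ) :
    (ipw P A L c t).FactorsThrough (history A L t) := fun ω ω' h => by
  refine prod_congr rfl fun k hk => ?_
  have hkt : (k : ℕ) < t := (mem_filter.1 hk).2
  have hAk : A k ω = A k ω' := congrFun (congrArg Prod.snd h) ⟨k, hkt⟩
  simp only [Set.indicator, Set.mem_ofPred_eq, hAk, history_factorsThrough hkt.le h]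

theorem ipw_eq_zero_of_notMem {c : Fin K → Bool} {ω : Ω} (hω : ω ∉ Apast A K c) :
    ipw P A L c K ω = 0 := by
  obtain ⟨k, -, hk⟩ : ∃ k : Fin K, (k : ℕ) < K ∧ A k ω ≠ c k := by
    simpa [Apast] using hω
  exact prod_eq_zero (mem_filter.2 ⟨mem_univ k, k.isLt⟩)
    (Set.indicator_of_notMem (show ω ∉ {ω' | A k ω' = c k} from hk) _)

def CondMeanIndep (A : Fin K → Ω → Bool) (L : Fin K → Ω → 𝓛) (c : Fin K → Bool)
    (Z : Ω → ℝ) : Prop :=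
  ∀ (t : Fin K) (l : Fin K → 𝓛) (b : Fin K → Bool), 0 < P (Lpast L t l ∩ Apast A t b) →
    ∫ ω in {ω | A t ω = c t} ∩ (Lpast L t l ∩ Apast A t b), Z ω ∂P =
      cP P {ω | A t ω = c t} (Lpast L t l ∩ Apast A t b) *
        ∫ ω in Lpast L t l ∩ Apast A t b, Z ω ∂P

theorem condMeanIndep_of_A2ok [IsFiniteMeasure P] {Ypot : (Fin K → Bool) → Ω → ℝ}
    (hA2 : A2ok P A L Ypot) (c : Fin K → Bool) (hY : Measurable (Ypot c)) :
    CondMeanIndep P A L c (Ypot c) := fun t l b hpos =>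
  setIntegral_inter_eq_cP_mul hY hpos.ne' fun B hB => hA2 t c B hB (c t) l b hpos

theorem condMeanIndep_const [IsFiniteMeasure P] (c : Fin K → Bool) (r : ℝ) :
    CondMeanIndep P A L c fun _ => r := fun t l b hpos => by
  simp only [setIntegral_const, smul_eq_mul, ← cP_mul_measureReal hpos.ne']
  ring

theorem integral_ipw_mul [MeasurableSpace 𝓛] [Fintype 𝓛] [MeasurableSingletonClass 𝓛]
    (hA : ∀ k, Measurable (A k)) (hL : ∀ k, Measurable (L k)) (hA3 : A3ok P A L)
    {c : Fin K → Bool} {Z : Ω → ℝ} (hZ : Integrable Z P) (hZc : CondMeanIndep P A L c Z)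
    {t : ℕ} (ht : t ≤ K) :
    ∫ ω, ipw P A L c t ω * Z ω ∂P = ∫ ω, Z ω ∂P := by
  induction t with
  | zero => simp [ipw]
  | succ t ih =>
    have ht' : t < K := ht
    simp only [ipw_succ P ht']
    rw [integral_mul_indicator_inv_cP_mul (E := {ω | A ⟨t, ht'⟩ ω = c ⟨t, ht'⟩})
      (measurable_history hA hL t) (hA _ (measurableSet_singleton _))
      (ipw_factorsThrough P c t) hZ, ih (by omega)]
    · intro ω hpos
      rw [history_preimage_singleton] at hpos ⊢
      exact hZc _ _ _ hpos
    · intro ω hpos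
      rw [history_preimage_singleton] at hpos ⊢
      exact (hA3 _ _ _ _ hpos).ne'

end InverseProbabilityWeight

section Regimes

variable {Ω : Type*} {K : ℕ} {A : Fin K → Ω → Bool}

theorem ApastV_inter_EtrV (m : ℕ) (b : {k : Fin K // (k : ℕ) < K - m} → Bool)
    (as : Fin K → Bool) :
    ApastV A m b ∩ EtrV A m as = Apast A K (concatRegime m b as) := by
  ext ω
  simp only [ApastV, EtrV, Apast, concatRegime, Set.mem_inter_iff, Set.mem_ofPred_eq]
  refine ⟨fun ⟨hpast, hlast⟩ k _ => ?_, fun h => ⟨fun k hk => ?_, fun k hk => ?_⟩⟩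
  · split_ifs with hk
    exacts [hpast k hk, hlast k (by omega)]
  · simpa [hk] using h k k.isLt
  · simpa [show ¬(k : ℕ) < K - m by omega] using h k k.isLt

variable [MeasurableSpace Ω]

theorem setIntegral_Etr_eq_sum {P : Measure Ω} (hA : ∀ k, Measurable (A k)) (m : ℕ)
    (a : Bool) {F : Ω → ℝ} (hF : ∀ b, IntegrableOn F (Apast A K (concatRegime m b fun _ => a)) P) :
    ∫ ω in Etr A m a, F ω ∂P =
      ∑ b : {k : Fin K // (k : ℕ) < K - m} → Bool,
        ∫ ω in Apast A K (concatRegime m b fun _ => a), F ω ∂P := by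
  set H : Ω → ({k : Fin K // (k : ℕ) < K - m} → Bool) := fun ω k => A k ω
  have hH : Measurable H := measurable_pi_lambda _ fun k => hA k
  have hfiber : ∀ b, H ⁻¹' {b} ∩ Etr A m a = Apast A K (concatRegime m b fun _ => a) := by
    intro b
    rw [← ApastV_inter_EtrV]
    congr 1
    ext ω
    simp [H, ApastV, funext_iff]
  have hmeas : ∀ b, MeasurableSet (H ⁻¹' {b}) := fun b => hH (measurableSet_singleton b)
  rw [integral_eq_sum_setIntegral_fiber hH fun b => ?_]
  · simp only [Measure.restrict_restrict (hmeas _), hfiber]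
  · rw [IntegrableOn, Measure.restrict_restrict (hmeas b), hfiber]
    exact hF b

end Regimes

section StabilizedWeights

variable {Ω : Type*} [MeasurableSpace Ω] {𝓛 : Type*} {K : ℕ} {P : Measure Ω}
  [IsProbabilityMeasure P] {A : Fin K → Ω → Bool} {L : Fin K → Ω → 𝓛}

theorem Wsw_eq_measureReal_mul_ipw (ω : Ω) :
    Wsw P A L ω = P.real (Apast A K fun j => A j ω) * ipw P A L (fun j => A j ω) K ω := by
  have hall : univ.filter (fun k : Fin K => (k : ℕ) < K) = univ :=
    filter_true_of_mem fun k _ => k.isLt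
  rw [measureReal_Apast_eq_prod P _ le_rfl, ipw, hall, ← prod_mul_distrib]
  refine prod_congr rfl fun k _ => ?_
  rw [Set.indicator_of_mem (show ω ∈ {ω' | A k ω' = A k ω} from rfl),
    history_preimage_singleton, div_eq_mul_inv]

theorem Wsw_mul_eqOn_Apast {c : Fin K → Bool} {f Z : Ω → ℝ}
    (hf : Set.EqOn f Z (Apast A K c)) :
    Set.EqOn (fun ω => Wsw P A L ω * f ω)
      (fun ω => P.real (Apast A K c) * (ipw P A L c K ω * Z ω)) (Apast A K c) := by
  intro ω hω
  obtain rfl : (fun j => A j ω) = c := funext fun k => hω k k.isLt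
  dsimp only
  rw [Wsw_eq_measureReal_mul_ipw, hf hω, mul_assoc]

variable [MeasurableSpace 𝓛] [Fintype 𝓛] [MeasurableSingletonClass 𝓛]

theorem setIntegral_Etr_Wsw_mul (hA : ∀ k, Measurable (A k)) (hL : ∀ k, Measurable (L k))
    (hA3 : A3ok P A L) (m : ℕ) (a : Bool) {f : Ω → ℝ} {Z : (Fin K → Bool) → Ω → ℝ}
    (hf : ∀ c, Set.EqOn f (Z c) (Apast A K c)) (hZ : ∀ c, Integrable (Z c) P)
    (hZc : ∀ c, CondMeanIndep P A L c (Z c)) :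
    ∫ ω in Etr A m a, Wsw P A L ω * f ω ∂P =
      ∑ b : {k : Fin K // (k : ℕ) < K - m} → Bool,
        P.real (Apast A K (concatRegime m b fun _ => a)) *
          ∫ ω, Z (concatRegime m b fun _ => a) ω ∂P := by
  have hipw : ∀ c, Integrable (fun ω => ipw P A L c K ω * Z c ω) P := fun c =>
    (hZ c).mul_of_factorsThrough (measurable_history hA hL K) (ipw_factorsThrough P c K)
  rw [setIntegral_Etr_eq_sum hA m a fun b => ((hipw _).const_mul _).integrableOn.congr_fun
    (Wsw_mul_eqOn_Apast (hf _)).symm (measurableSet_Apast hA K _)]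
  refine sum_congr rfl fun b _ => ?_
  set c := concatRegime m b fun _ => a
  calc ∫ ω in Apast A K c, Wsw P A L ω * f ω ∂P
      = ∫ ω in Apast A K c, P.real (Apast A K c) * (ipw P A L c K ω * Z c ω) ∂P :=
        setIntegral_congr_fun (measurableSet_Apast hA K c) (Wsw_mul_eqOn_Apast (hf c))
    _ = P.real (Apast A K c) * ∫ ω, ipw P A L c K ω * Z c ω ∂P := by
        rw [integral_const_mul, setIntegral_eq_integral_of_forall_compl_eq_zero fun ω hω => by
          rw [ipw_eq_zero_of_notMem P hω, zero_mul]]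
    _ = P.real (Apast A K c) * ∫ ω, Z c ω ∂P := by
        rw [integral_ipw_mul P hA hL hA3 (hZ c) (hZc c) le_rfl]

theorem setIntegral_Etr_Wsw_mul_div (hA : ∀ k, Measurable (A k)) (hL : ∀ k, Measurable (L k))
    (hA3 : A3ok P A L) {Y : Ω → ℝ} {Ypot : (Fin K → Bool) → Ω → ℝ}
    (hYpm : ∀ c, Measurable (Ypot c)) (hYpi : ∀ c, Integrable (Ypot c) P)
    (hA1 : A1ok A Y Ypot) (hA2 : A2ok P A L Ypot) (m : ℕ) (a : Bool) :
    (∫ ω in Etr A m a, Wsw P A L ω * Y ω ∂P) / (∫ ω in Etr A m a, Wsw P A L ω ∂P) =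
      ∑ b : {k : Fin K // (k : ℕ) < K - m} → Bool,
        (∫ ω, Ypot (concatRegime m b fun _ => a) ω ∂P) * cP P (ApastV A m b) (Etr A m a) := by
  have hnum := setIntegral_Etr_Wsw_mul hA hL hA3 m a
    (fun c ω hω => hA1 c ω fun k => hω k k.isLt) hYpi
    (fun c => condMeanIndep_of_A2ok P hA2 c (hYpm c))
  have hden := setIntegral_Etr_Wsw_mul hA hL hA3 m a (f := fun _ => 1) (Z := fun _ _ => 1)
    (fun _ _ _ => rfl) (fun _ => integrable_const 1) (fun c => condMeanIndep_const P c 1)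
  have hmass : P.real (Etr A m a) =
      ∑ b : {k : Fin K // (k : ℕ) < K - m} → Bool,
        P.real (Apast A K (concatRegime m b fun _ => a)) := by
    simpa using setIntegral_Etr_eq_sum (P := P) hA m a (F := fun _ => (1 : ℝ))
      fun _ => integrableOn_const
  simp only [mul_one, integral_const, probReal_univ, smul_eq_mul] at hden
  rw [hnum, hden, ← hmass, sum_div]
  refine sum_congr rfl fun b _ => ?_
  rw [cP, ← measureReal_def, ← measureReal_def,
    show ApastV A m b ∩ Etr A m a = _ from ApastV_inter_EtrV m b fun _ => a]
  ring

end StabilizedWeights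

theorem sw_estimand_characterization_general
    {Ω : Type*} [MeasurableSpace Ω] {𝓛 : Type*} [MeasurableSpace 𝓛]
    [Fintype 𝓛] [MeasurableSingletonClass 𝓛]
    (P : Measure Ω) [IsProbabilityMeasure P]
    {K m : ℕ}
    (A : Fin K → Ω → Bool) (L : Fin K → Ω → 𝓛)
    (hA : ∀ k, Measurable (A k)) (hL : ∀ k, Measurable (L k))
    (Y : Ω → ℝ)
    (Ypot : (Fin K → Bool) → Ω → ℝ)
    (hYpm : ∀ a, Measurable (Ypot a)) (hYpi : ∀ a, Integrable (Ypot a) P)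
    (hA1 : A1ok A Y Ypot) (hA2 : A2ok P A L Ypot) (hA3 : A3ok P A L) :
    θW P A m (Wsw P A L) Y =
      (∑ b : ({k : Fin K // (k : ℕ) < K - m} → Bool),
          (∫ ω, Ypot (concatRegime m b (fun _ => true)) ω ∂P) *
            cP P (ApastV A m b) (Etr A m true)) -
        ∑ b : ({k : Fin K // (k : ℕ) < K - m} → Bool),
          (∫ ω, Ypot (concatRegime m b (fun _ => false)) ω ∂P) *
            cP P (ApastV A m b) (Etr A m false) := by
  rw [θW, setIntegral_Etr_Wsw_mul_div hA hL hA3 hYpm hYpi hA1 hA2,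
    setIntegral_Etr_Wsw_mul_div hA hL hA3 hYpm hYpi hA1 hA2]

/-- Characterization of the SW estimand (equation (B.2.2)). -/
theorem sw_estimand_characterization
    {Ω : Type*} [MeasurableSpace Ω] {𝓛 : Type*} [MeasurableSpace 𝓛]
    [Fintype 𝓛] [Nonempty 𝓛] [MeasurableSingletonClass 𝓛]
    (P : Measure Ω) [IsProbabilityMeasure P]
    {K m : ℕ} (hK : 1 ≤ K) (hm1 : 1 ≤ m) (hmK : m ≤ K)
    (A : Fin K → Ω → Bool) (L : Fin K → Ω → 𝓛)
    (hA : ∀ k, Measurable (A k)) (hL : ∀ k, Measurable (L k))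
    (Y : Ω → ℝ) (hY : Measurable Y)
    (Ypot : (Fin K → Bool) → Ω → ℝ)
    (hYpm : ∀ a, Measurable (Ypot a)) (hYpi : ∀ a, Integrable (Ypot a) P)
    (hpos1 : 0 < P (Etr A m true)) (hpos0 : 0 < P (Etr A m false))
    (hA1 : A1ok A Y Ypot) (hA2 : A2ok P A L Ypot) (hA3 : A3ok P A L) :
    θW P A m (Wsw P A L) Y =
      (∑ b : ({k : Fin K // (k : ℕ) < K - m} → Bool),
          (∫ ω, Ypot (concatRegime m b (fun _ => true)) ω ∂P) *
            cP P (ApastV A m b) (Etr A m true)) -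
        ∑ b : ({k : Fin K // (k : ℕ) < K - m} → Bool),
          (∫ ω, Ypot (concatRegime m b (fun _ => false)) ω ∂P) *
            cP P (ApastV A m b) (Etr A m false) :=
  sw_estimand_characterization_general P A L hA hL Y Ypot hYpm hYpi hA1 hA2 hA3

end MSMPaper
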